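/- arXiv:1511.06436 — 2 statements merged into one kernel-verified Lean document; each statement's English description precedes it below -/
import Mathlib

section
/- If a ∈ K^n is a common zero of the polynomials {f_C : C ∈ S} associated to a set S of 3-CNF clauses, then the truth assignment sending y_j to true when a_j = 1 and false otherwise satisfies every clause in S. -/
/-- The polynomial associated to a 3-CNF clause (a list of literals `(j, b)`): the product
of `X j - 1` over positive literals and `X j` over negative literals. -/
noncomputable def clausePoly (K : Type*) [Field K] (n : ℕ) (C : List (Fin n × Bool)) :
    MvPolynomial (Fin n) K :=
  (C.map fun l => if l.2 then MvPolynomial.X l.1 - 1 else MvPolynomial.X l.1).prod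

/-- If `a ∈ K^n` is a common zero of the polynomials `{f_C : C ∈ S}` associated to a set
`S` of 3-CNF clauses, then the truth assignment sending `y j` to true exactly when
`a j = 1` satisfies every clause in `S` (a literal `(j, b)` is satisfied exactly when
`a j = 1 ↔ b = true`). -/
theorem common_zero_gives_satisfying_assignment (K : Type*) [Field K] (n : ℕ)
    (S : Finset (List (Fin n × Bool))) (h3 : ∀ C ∈ S, C.length = 3)
    (a : Fin n → K) (ha : ∀ C ∈ S, MvPolynomial.eval a (clausePoly K n C) = 0) :
    ∀ C ∈ S, ∃ l ∈ C, (a l.1 = 1 ↔ l.2 = true) := by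
  intro C hC
  have h := ha C hC
  rw [clausePoly, ← List.prod_hom _ (MvPolynomial.eval a)] at h
  rw [List.prod_eq_zero_iff, List.map_map, List.mem_map] at h
  obtain ⟨l, hl, hx0⟩ := h
  refine ⟨l, hl, ?_⟩
  simp only [Function.comp] at hx0
  cases hb : l.2 <;> simp [hb] at hx0 ⊢
  · intro h1; rw [h1] at hx0; exact one_ne_zero hx0
  · linear_combination hx0
end

section
/- Let F be a solvable polynomial system and let F_1,...,F_{c+1} be copies of F on pairwise disjoint variable sets, together with the polynomial g = x + Σ x_{i,j} where x is a fresh variable. Then for any subset H of G := {g} ∪ F_1 ∪ ... ∪ F_{c+1} with |H| ≤ c, the system G \ H has a common zero if and only if F has a common zero. -/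
/-- The combined system `G = {g} ∪ F₁ ∪ ⋯ ∪ F_{c+1}` built from a system
`f : Fin m → K[x₁,...,xₙ]`: index `none` is the polynomial `g = x + Σ_{i,j} x_{i,j}`
(`x` a fresh variable, indexed by `none` in the variable type), and index `some (i, t)`
is the copy of `f t` on the `i`-th disjoint set of variables. -/
noncomputable def bigSystem (K : Type*) [Field K] (n m c : ℕ)
    (f : Fin m → MvPolynomial (Fin n) K) :
    Option (Fin (c + 1) × Fin m) → MvPolynomial (Option (Fin (c + 1) × Fin n)) K
  | none => MvPolynomial.X none +
      ∑ i : Fin (c + 1), ∑ j : Fin n, MvPolynomial.X (some (i, j))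
  | some (i, t) => MvPolynomial.rename (fun j => some (i, j)) (f t)

/-!
Removing at most `c` polynomials from `G` leaves at least one of the `c + 1` copies `Fᵢ`
untouched, and a zero of `Fᵢ` read on the `i`-th block of variables is a zero of `F`.
Conversely, a zero `b` of `F` placed on every block solves every copy, and the fresh
variable `x` absorbs `g` by taking the value `-Σ_{i,j} b_j`.
-/

open MvPolynomial

lemma exists_block_disjoint_of_card_lt {ι κ : Type*} [Fintype ι] (H : Finset (Option (ι × κ)))
    (hH : H.card < Fintype.card ι) : ∃ i : ι, ∀ t : κ, some (i, t) ∉ H := by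
  by_contra! hit
  choose t ht using hit
  have hinj : Function.Injective fun i => (some (i, t i) : Option (ι × κ)) :=
    fun i j hij => congrArg Prod.fst (Option.some_injective _ hij)
  have := Finset.card_le_card_of_injOn (s := Finset.univ) _ (fun i _ => ht i) hinj.injOn
  rw [Finset.card_univ] at this
  omega

section bigSystem

variable {K : Type*} [Field K] {n m c : ℕ} (f : Fin m → MvPolynomial (Fin n) K)

lemma eval_bigSystem_some (a : Option (Fin (c + 1) × Fin n) → K) (i : Fin (c + 1))
    (t : Fin m) :
    eval a (bigSystem K n m c f (some (i, t))) = eval (fun j => a (some (i, j))) (f t) := by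
  simp only [bigSystem, eval_rename, Function.comp_def]

def replicatePoint (c : ℕ) (b : Fin n → K) : Option (Fin (c + 1) × Fin n) → K :=
  fun o => o.elim (-∑ _i : Fin (c + 1), ∑ j, b j) (fun p => b p.2)

lemma eval_bigSystem_replicatePoint (b : Fin n → K) (hb : ∀ t, eval b (f t) = 0) :
    ∀ s, eval (replicatePoint c b) (bigSystem K n m c f s) = 0
  | none => by simp [bigSystem, replicatePoint]
  | some (i, t) => by rw [eval_bigSystem_some]; exact hb t

end bigSystem

/-- For any subset `H` of the combined system of size at most `c`, the system `G \ H` has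
a common zero if and only if the original system `F` has a common zero. -/
theorem removed_copies_solvable_iff (K : Type*) [Field K] (n m c : ℕ)
    (f : Fin m → MvPolynomial (Fin n) K)
    (H : Finset (Option (Fin (c + 1) × Fin m))) (hH : H.card ≤ c) :
    (∃ a : Option (Fin (c + 1) × Fin n) → K,
        ∀ t ∉ H, MvPolynomial.eval a (bigSystem K n m c f t) = 0) ↔
      (∃ b : Fin n → K, ∀ i : Fin m, MvPolynomial.eval b (f i) = 0) := by
  constructor
  · rintro ⟨a, ha⟩
    obtain ⟨i, hi⟩ := exists_block_disjoint_of_card_lt H (by simpa using Nat.lt_succ_of_le hH)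
    exact ⟨fun j => a (some (i, j)), fun t => by
      rw [← eval_bigSystem_some]; exact ha _ (hi t)⟩
  · rintro ⟨b, hb⟩
    exact ⟨replicatePoint c b, fun s _ => eval_bigSystem_replicatePoint f b hb s⟩
end
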